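/- arXiv:2601.09406 — 2 statements merged into one kernel-verified Lean document; each statement's English description precedes it below -/
import Mathlib

section
/- Let X and Y be finite nonempty sets, let α ∈ (0,1) ∪ (1,∞), let p be a strictly positive probability distribution on X, and let W be a channel from X to Y. Let p̃(x) = p(x)^{1/α} / ∑_{x'} p(x')^{1/α} be the (1/α)-tilted distribution of p. Then the supremum over all strictly positive families r_{X|Y} of (∑_{x,y} p̃(x) · W(y|x) · r(x|y)^{(α−1)/α})^{α/(α−1)} equals (∑_{x} p(x)^{1/α})^{−α/(α−1)} · (∑_{y∈Y} (∑_{x∈X} p(x) · W(y|x)^α)^{1/α})^{α/(α−1)}; that is, the generalized conditional vulnerability under the tilted prior equals exp(−H_α^S(X|Y)), the exponential of minus the Sibson conditional entropy of order α. -/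
/-!
For a fixed output `y` put `a x = p̃ x * W(y|x)`. Writing `a x * r x ^ ((α - 1) / α) = r x * z x`
with `z x = a x * r x ^ (-1 / α)`, one has `∑ r x * z x ^ α = ∑ a x ^ α`, so Jensen's inequality
for `t ↦ t ^ α` with weights `r(·|y)` bounds `∑ₓ a x * r x ^ ((α - 1) / α)` by `‖a‖_α` from above
when `α > 1` and from below when `α < 1`. As `t ↦ t ^ (α / (α - 1))` is increasing, resp.
decreasing, every candidate is at most `(∑_y ‖a(·, y)‖_α) ^ (α / (α - 1))`. The bound is attained
at the tilted family `r(x|y) ∝ a x ^ α`, which may vanish somewhere; its smoothings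
`(a x ^ α + δ) / (∑ a ^ α + |X| δ)` are strictly positive and approach the bound as `δ → 0`.
Finally `‖p̃ W(y|·)‖_α = (∑ₓ p x W(y|x) ^ α) ^ (1 / α) / ∑ₓ p x ^ (1 / α)`.
-/

open Real BigOperators Finset Filter Topology

section Holder

lemma mul_rpow_sub_one_div_self {α a r : ℝ} (hα : α ≠ 0) (hr : 0 < r) :
    a * r ^ ((α - 1) / α) = r * (a * r ^ (-(1 / α))) := by
  have : (α - 1) / α = 1 + -(1 / α) := by field_simp; ring
  rw [this, rpow_add hr, rpow_one]; ring

lemma mul_mul_rpow_neg_one_div_rpow {α a r : ℝ} (hα : α ≠ 0) (ha : 0 ≤ a) (hr : 0 < r) :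
    r * (a * r ^ (-(1 / α))) ^ α = a ^ α := by
  rw [mul_rpow ha (rpow_nonneg hr.le _), ← rpow_mul hr.le, neg_mul, one_div_mul_cancel hα,
    rpow_neg_one]
  field_simp

variable {X : Type*} [Fintype X] {α : ℝ} {a r : X → ℝ}

lemma sum_mul_rpow_le_rpow_sum_rpow (hα : 1 ≤ α) (ha : ∀ x, 0 ≤ a x) (hr : ∀ x, 0 < r x)
    (hr1 : ∑ x, r x = 1) :
    ∑ x, a x * r x ^ ((α - 1) / α) ≤ (∑ x, a x ^ α) ^ (1 / α) := by
  have hα0 : α ≠ 0 := by positivity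
  simp only [mul_rpow_sub_one_div_self hα0 (hr _),
    ← fun x => mul_mul_rpow_neg_one_div_rpow hα0 (ha x) (hr x)]
  exact arith_mean_le_rpow_mean _ _ _ (fun x _ => (hr x).le) hr1
    (fun x _ => mul_nonneg (ha x) (rpow_nonneg (hr x).le _)) hα

lemma rpow_sum_rpow_le_sum_mul_rpow (hα0 : 0 < α) (hα1 : α ≤ 1) (ha : ∀ x, 0 ≤ a x)
    (hr : ∀ x, 0 < r x) (hr1 : ∑ x, r x = 1) :
    (∑ x, a x ^ α) ^ (1 / α) ≤ ∑ x, a x * r x ^ ((α - 1) / α) := by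
  simp only [mul_rpow_sub_one_div_self hα0.ne' (hr _),
    ← fun x => mul_mul_rpow_neg_one_div_rpow hα0.ne' (ha x) (hr x)]
  have hz : ∀ x, 0 ≤ a x * r x ^ (-(1 / α)) := fun x => mul_nonneg (ha x) (rpow_nonneg (hr x).le _)
  have jensen := (concaveOn_rpow hα0.le hα1).le_map_sum (t := univ) (fun x _ => (hr x).le) hr1
    (fun x _ => Set.mem_Ici.mpr (hz x))
  simp only [smul_eq_mul] at jensen
  calc (∑ x, r x * (a x * r x ^ (-(1 / α))) ^ α) ^ (1 / α)
      ≤ ((∑ x, r x * (a x * r x ^ (-(1 / α)))) ^ α) ^ (1 / α) :=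
        rpow_le_rpow (sum_nonneg fun x _ => mul_nonneg (hr x).le (rpow_nonneg (hz x) _)) jensen
          (by positivity)
    _ = ∑ x, r x * (a x * r x ^ (-(1 / α))) := by
        rw [← rpow_mul (sum_nonneg fun x _ => mul_nonneg (hr x).le (hz x)),
          mul_one_div_cancel hα0.ne', rpow_one]

end Holder

section Tilt

variable {X : Type*} [Fintype X] {α : ℝ} {a : X → ℝ}

lemma sum_mul_tilted_rpow (hα : α ≠ 0) (ha : ∀ x, 0 ≤ a x) :
    ∑ x, a x * (a x ^ α / ∑ x', a x' ^ α) ^ ((α - 1) / α) = (∑ x, a x ^ α) ^ (1 / α) := by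
  set T := ∑ x', a x' ^ α
  have hT : 0 ≤ T := sum_nonneg fun x _ => rpow_nonneg (ha x) α
  have hterm : ∀ x, a x * (a x ^ α / T) ^ ((α - 1) / α) = a x ^ α / T ^ ((α - 1) / α) := by
    intro x
    rw [div_rpow (rpow_nonneg (ha x) α) hT, ← rpow_mul (ha x), mul_div_cancel₀ _ hα,
      ← mul_div_assoc, mul_comm, ← rpow_add_one' (ha x) (by simpa using hα), sub_add_cancel]
  have hexp : 1 / α = 1 - (α - 1) / α := by field_simp; ring
  rw [sum_congr rfl fun x _ => hterm x, ← sum_div, hexp, rpow_sub' hT (by rw [← hexp]; positivity),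
    rpow_one]

noncomputable def smoothedTilt (α δ : ℝ) (a : X → ℝ) (x : X) : ℝ :=
  (a x ^ α + δ) / (∑ x', a x' ^ α + Fintype.card X * δ)

lemma smoothedTilt_denom_pos [Nonempty X] (ha : ∀ x, 0 ≤ a x) {δ : ℝ} (hδ : 0 < δ) :
    0 < ∑ x', a x' ^ α + Fintype.card X * δ := by
  have := sum_nonneg fun x (_ : x ∈ univ) => rpow_nonneg (ha x) α
  have : (0 : ℝ) < Fintype.card X := by exact_mod_cast Fintype.card_pos
  positivity

lemma smoothedTilt_pos [Nonempty X] (ha : ∀ x, 0 ≤ a x) {δ : ℝ} (hδ : 0 < δ) (x : X) :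
    0 < smoothedTilt α δ a x :=
  div_pos (by have := rpow_nonneg (ha x) α; positivity) (smoothedTilt_denom_pos ha hδ)

lemma sum_smoothedTilt [Nonempty X] (ha : ∀ x, 0 ≤ a x) {δ : ℝ} (hδ : 0 < δ) :
    ∑ x, smoothedTilt α δ a x = 1 := by
  simp only [smoothedTilt]
  rw [← sum_div, sum_add_distrib, sum_const, card_univ, nsmul_eq_mul,
    div_self (smoothedTilt_denom_pos ha hδ).ne']

lemma tendsto_const_mul_rpow_const {ι : Type*} {l : Filter ι} {f : ι → ℝ} {a b c : ℝ}
    (h : a ≠ 0 → Tendsto f l (𝓝 b) ∧ b ≠ 0) :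
    Tendsto (fun t => a * f t ^ c) l (𝓝 (a * b ^ c)) := by
  rcases eq_or_ne a 0 with rfl | ha
  · simpa using tendsto_const_nhds
  · obtain ⟨hf, hb⟩ := h ha
    exact ((continuousAt_rpow_const b c (.inl hb)).tendsto.comp hf).const_mul a

lemma tendsto_sum_mul_smoothedTilt_rpow (hα : α ≠ 0) (ha : ∀ x, 0 ≤ a x) :
    Tendsto (fun δ => ∑ x, a x * smoothedTilt α δ a x ^ ((α - 1) / α)) (𝓝 0)
      (𝓝 ((∑ x, a x ^ α) ^ (1 / α))) := by
  rw [← sum_mul_tilted_rpow hα ha]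
  refine tendsto_finsetSum _ fun x _ => tendsto_const_mul_rpow_const fun hax => ?_
  have hpos : 0 < a x ^ α := rpow_pos_of_pos ((ha x).lt_of_ne' hax) α
  have hT : 0 < ∑ x', a x' ^ α :=
    hpos.trans_le (single_le_sum (fun x' _ => rpow_nonneg (ha x') α) (mem_univ x))
  refine ⟨?_, (div_pos hpos hT).ne'⟩
  have hcont : Tendsto (fun δ : ℝ => (a x ^ α + δ) / (∑ x', a x' ^ α + Fintype.card X * δ))
      (𝓝 0) (𝓝 ((a x ^ α + 0) / (∑ x', a x' ^ α + Fintype.card X * 0))) :=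
    (tendsto_const_nhds.add tendsto_id).div
      (tendsto_const_nhds.add (tendsto_const_nhds.mul tendsto_id)) (by simpa using hT.ne')
  simpa [smoothedTilt] using hcont

end Tilt

lemma csSup_eq_of_forall_le_of_tendsto {ι : Type*} {s : Set ℝ} {l : Filter ι} [l.NeBot]
    {f : ι → ℝ} {b : ℝ} (hle : ∀ v ∈ s, v ≤ b) (hf : Tendsto f l (𝓝 b))
    (hmem : ∀ᶠ i in l, f i ∈ s) : sSup s = b :=
  (isLUB_of_mem_closure hle (mem_closure_of_tendsto hf hmem)).csSup_eq
    (hmem.exists.elim fun i hi => ⟨f i, hi⟩)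

section Channel

variable {X Y : Type*} [Fintype X] [Fintype Y] {α : ℝ} {a : Y → X → ℝ}

lemma rpow_sum_sum_mul_rpow_le (hα0 : 0 < α) (hα1 : α ≠ 1) (ha : ∀ y x, 0 ≤ a y x)
    (hB : 0 < ∑ y, (∑ x, a y x ^ α) ^ (1 / α)) {r : Y → X → ℝ} (hr : ∀ y x, 0 < r y x)
    (hr1 : ∀ y, ∑ x, r y x = 1) :
    (∑ y, ∑ x, a y x * r y x ^ ((α - 1) / α)) ^ (α / (α - 1))
      ≤ (∑ y, (∑ x, a y x ^ α) ^ (1 / α)) ^ (α / (α - 1)) := by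
  rcases hα1.lt_or_gt with hlt | hgt
  · refine rpow_le_rpow_of_nonpos hB (sum_le_sum fun y _ => ?_)
      (div_nonpos_of_nonneg_of_nonpos hα0.le (by linarith))
    exact rpow_sum_rpow_le_sum_mul_rpow hα0 hlt.le (ha y) (hr y) (hr1 y)
  · refine rpow_le_rpow (sum_nonneg fun y _ => sum_nonneg fun x _ =>
      mul_nonneg (ha y x) (rpow_nonneg (hr y x).le _)) (sum_le_sum fun y _ => ?_)
      (div_nonneg hα0.le (by linarith))
    exact sum_mul_rpow_le_rpow_sum_rpow hgt.le (ha y) (hr y) (hr1 y)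

lemma sSup_rpow_sum_sum_mul_rpow [Nonempty X] (hα0 : 0 < α) (hα1 : α ≠ 1)
    (ha : ∀ y x, 0 ≤ a y x) (hB : 0 < ∑ y, (∑ x, a y x ^ α) ^ (1 / α)) :
    sSup {v : ℝ | ∃ r : Y → X → ℝ, (∀ y x, 0 < r y x) ∧ (∀ y, ∑ x, r y x = 1) ∧
        v = (∑ y, ∑ x, a y x * r y x ^ ((α - 1) / α)) ^ (α / (α - 1))}
      = (∑ y, (∑ x, a y x ^ α) ^ (1 / α)) ^ (α / (α - 1)) := by
  have hlim := (continuousAt_rpow_const _ (α / (α - 1)) (.inl hB.ne')).tendsto.comp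
    (tendsto_finsetSum univ fun y _ => tendsto_sum_mul_smoothedTilt_rpow hα0.ne' (ha y))
  refine csSup_eq_of_forall_le_of_tendsto ?_ (hlim.mono_left nhdsWithin_le_nhds)
    ((eventually_mem_nhdsWithin (s := Set.Ioi 0)).mono fun δ hδ =>
      ⟨fun y => smoothedTilt α δ (a y), fun y => smoothedTilt_pos (ha y) hδ,
        fun y => sum_smoothedTilt (ha y) hδ, rfl⟩)
  rintro v ⟨r, hr, hr1, rfl⟩
  exact rpow_sum_sum_mul_rpow_le hα0 hα1 ha hB hr hr1

end Channel

lemma rpow_sum_rpow_div_mul_rpow {X : Type*} [Fintype X] {α Z : ℝ} {p w : X → ℝ} (hα : α ≠ 0)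
    (hp : ∀ x, 0 ≤ p x) (hw : ∀ x, 0 ≤ w x) (hZ : 0 ≤ Z) :
    (∑ x, (p x ^ (1 / α) / Z * w x) ^ α) ^ (1 / α) = (∑ x, p x * w x ^ α) ^ (1 / α) / Z := by
  have hterm : ∀ x, (p x ^ (1 / α) / Z * w x) ^ α = p x * w x ^ α / Z ^ α := fun x => by
    rw [mul_rpow (div_nonneg (rpow_nonneg (hp x) _) hZ) (hw x), div_rpow (rpow_nonneg (hp x) _) hZ,
      ← rpow_mul (hp x), one_div_mul_cancel hα, rpow_one, div_mul_eq_mul_div]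
  rw [sum_congr rfl fun x _ => hterm x, ← sum_div,
    div_rpow (sum_nonneg fun x _ => mul_nonneg (hp x) (rpow_nonneg (hw x) _)) (rpow_nonneg hZ _),
    ← rpow_mul hZ, mul_one_div_cancel hα, rpow_one]

lemma sum_rpow_sum_mul_rpow_pos {X Y : Type*} [Fintype X] [Fintype Y] [Nonempty X] {α : ℝ}
    {p : X → ℝ} {W : X → Y → ℝ} (hp : ∀ x, 0 < p x) (hW : ∀ x y, 0 ≤ W x y)
    (hW1 : ∀ x, ∑ y, W x y = 1) :
    0 < ∑ y, (∑ x, p x * W x y ^ α) ^ (1 / α) := by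
  obtain ⟨x₀⟩ := ‹Nonempty X›
  obtain ⟨y₀, -, hy₀⟩ := exists_lt_of_sum_lt (s := univ) (f := 0) (g := W x₀) (by simp [hW1 x₀])
  have hterm : ∀ y x, 0 ≤ p x * W x y ^ α := fun y x =>
    mul_nonneg (hp x).le (rpow_nonneg (hW x y) α)
  refine sum_pos' (fun y _ => rpow_nonneg (sum_nonneg fun x _ => hterm y x) _)
    ⟨y₀, mem_univ _, rpow_pos_of_pos (sum_pos' (fun x _ => hterm y₀ x) ⟨x₀, mem_univ _, ?_⟩) _⟩
  exact mul_pos (hp x₀) (rpow_pos_of_pos hy₀ α)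

theorem conditional_vulnerability_eq_exp_neg_sibson_general
    {X Y : Type*} [Fintype X] [Fintype Y] [Nonempty X]
    (α : ℝ) (hα0 : 0 < α) (hα1 : α ≠ 1)
    (p : X → ℝ) (hp : ∀ x, 0 < p x)
    (W : X → Y → ℝ) (hW : ∀ x y, 0 ≤ W x y) (hW1 : ∀ x, (∑ y, W x y) = 1)
    (pt : X → ℝ) (hpt : ∀ x, pt x = p x ^ (1 / α) / ∑ x', p x' ^ (1 / α)) :
    sSup {v : ℝ | ∃ r : Y → X → ℝ, (∀ y x, 0 < r y x) ∧ (∀ y, (∑ x, r y x) = 1) ∧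
        v = (∑ z : X × Y, pt z.1 * W z.1 z.2 * r z.2 z.1 ^ ((α - 1) / α)) ^ (α / (α - 1))}
      = (∑ x, p x ^ (1 / α)) ^ (-(α / (α - 1)))
          * (∑ y, (∑ x, p x * W x y ^ α) ^ (1 / α)) ^ (α / (α - 1)) := by
  set Z := ∑ x', p x' ^ (1 / α)
  have hZ : 0 < Z := sum_pos (fun x _ => rpow_pos_of_pos (hp x) _) univ_nonempty
  have hQ := sum_rpow_sum_mul_rpow_pos (α := α) hp hW hW1
  have hcol : ∀ y, (∑ x, (p x ^ (1 / α) / Z * W x y) ^ α) ^ (1 / α)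
      = (∑ x, p x * W x y ^ α) ^ (1 / α) / Z := fun y =>
    rpow_sum_rpow_div_mul_rpow hα0.ne' (fun x => (hp x).le) (fun x => hW x y) hZ.le
  have hsum : ∀ r : Y → X → ℝ, ∑ z : X × Y, pt z.1 * W z.1 z.2 * r z.2 z.1 ^ ((α - 1) / α)
      = ∑ y, ∑ x, p x ^ (1 / α) / Z * W x y * r y x ^ ((α - 1) / α) := fun r => by
    rw [Fintype.sum_prod_type, sum_comm]
    simp only [hpt]
  simp only [hsum]
  rw [sSup_rpow_sum_sum_mul_rpow hα0 hα1 (fun y x => by have := hp x; have := hW x y; positivity)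
    (by simpa only [hcol, ← sum_div] using div_pos hQ hZ), sum_congr rfl fun y _ => hcol y,
    ← sum_div, div_rpow hQ.le hZ.le, rpow_neg hZ.le, div_eq_inv_mul]

/-- The generalized conditional vulnerability under the `(1/α)`-tilted prior equals
`exp(−H_α^S(X|Y))`, the exponential of minus the Sibson conditional entropy. -/
theorem conditional_vulnerability_eq_exp_neg_sibson
    {X Y : Type*} [Fintype X] [Fintype Y] [Nonempty X] [Nonempty Y]
    (α : ℝ) (hα0 : 0 < α) (hα1 : α ≠ 1)
    (p : X → ℝ) (hp : ∀ x, 0 < p x) (hp1 : (∑ x, p x) = 1)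
    (W : X → Y → ℝ) (hW : ∀ x y, 0 ≤ W x y) (hW1 : ∀ x, (∑ y, W x y) = 1)
    (pt : X → ℝ) (hpt : ∀ x, pt x = p x ^ (1 / α) / ∑ x', p x' ^ (1 / α)) :
    sSup {v : ℝ | ∃ r : Y → X → ℝ, (∀ y x, 0 < r y x) ∧ (∀ y, (∑ x, r y x) = 1) ∧
        v = (∑ z : X × Y, pt z.1 * W z.1 z.2 * r z.2 z.1 ^ ((α - 1) / α)) ^ (α / (α - 1))}
      = (∑ x, p x ^ (1 / α)) ^ (-(α / (α - 1)))
          * (∑ y, (∑ x, p x * W x y ^ α) ^ (1 / α)) ^ (α / (α - 1)) :=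
  conditional_vulnerability_eq_exp_neg_sibson_general α hα0 hα1 p hp W hW hW1 pt hpt
end

section
/- Generalized g-leakage representation of Arimoto mutual information: let X and Y be finite nonempty sets, let α ∈ (0,1) ∪ (1,∞), and let p be a probability distribution on X × Y with marginal p_X(x) = ∑_y p(x,y), where p_X is strictly positive. Then (1/(1−α)) · log ∑_x p_X(x)^α − (α/(1−α)) · log ∑_y (∑_x p(x,y)^α)^{1/α} = log( sup over strictly positive families r_{X|Y} of (∑_{x,y} p(x,y) · r(x|y)^{(α−1)/α})^{α/(α−1)} ) − log( sup over strictly positive probability distributions r₀ on X of (∑_x p_X(x) · r₀(x)^{(α−1)/α})^{α/(α−1)} ); that is, the Arimoto mutual information I_α^A(X;Y) = H_α(X) − H_α^A(X|Y) equals the generalized multiplicative g-leakage log(V_cond/V_prior) for the Kolmogorov–Nagumo function ln_{1/α} and the soft 0-1 score. -/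
open Real BigOperators Finset

/-!
For `q ≥ 0` and a strictly positive distribution `r` on a finite set, the function
`z = q r^(-1/α)` satisfies `∑ r z = ∑ q r^((α-1)/α)` and `∑ r z^α = ∑ q^α`, so the power-mean
inequality with weights `r` (between orders `1` and `α`, or `α` and `1`) compares
`∑ q r^((α-1)/α)` with `(∑ q^α)^(1/α)`; after raising to the power `α/(α-1)`, whose sign
flips exactly when the comparison does, both cases give the same upper bound. Equality holds
at the escort distribution `q^α / ∑ q^α`, which may vanish, so the suprema over strictly positive
`r` are approached by smoothing it. Hence `V_cond = (∑_y (∑_x p(x,y)^α)^(1/α))^(α/(α-1))` and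
`V_prior = (∑_x p_X(x)^α)^(1/(α-1))`, and the identity is a computation with logarithms.
-/

section PowerMean

variable {ι : Type*} [Fintype ι] {α : ℝ} {q r : ι → ℝ}

lemma mul_mul_rpow_neg_one_div (hα : α ≠ 0) {s : ℝ} (hs : 0 < s) (t : ℝ) :
    s * (t * s ^ (-(1 / α))) = t * s ^ ((α - 1) / α) := by
  rw [show (α - 1) / α = 1 + -(1 / α) by field_simp; ring, rpow_add hs, rpow_one]
  ring

lemma mul_mul_rpow_neg_one_div_rpow_s16 (hα : α ≠ 0) {s t : ℝ} (hs : 0 < s) (ht : 0 ≤ t) :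
    s * (t * s ^ (-(1 / α))) ^ α = t ^ α := by
  rw [mul_rpow ht (rpow_nonneg hs.le _), ← rpow_mul hs.le, neg_mul, one_div_mul_cancel hα,
    rpow_neg_one]
  field_simp

theorem sum_mul_rpow_le_of_one_le (hα : 1 ≤ α) (hq : ∀ i, 0 ≤ q i) (hr : ∀ i, 0 < r i)
    (hr1 : ∑ i, r i = 1) :
    ∑ i, q i * r i ^ ((α - 1) / α) ≤ (∑ i, q i ^ α) ^ (1 / α) := by
  have hα0 : α ≠ 0 := by positivity
  have h := arith_mean_le_rpow_mean univ r (fun i => q i * r i ^ (-(1 / α)))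
    (fun i _ => (hr i).le) hr1 (fun i _ => mul_nonneg (hq i) (rpow_nonneg (hr i).le _)) hα
  simpa only [mul_mul_rpow_neg_one_div hα0 (hr _),
    mul_mul_rpow_neg_one_div_rpow_s16 hα0 (hr _) (hq _)] using h

theorem rpow_le_sum_mul_rpow_of_le_one (hα0 : 0 < α) (hα : α ≤ 1) (hq : ∀ i, 0 ≤ q i)
    (hr : ∀ i, 0 < r i) (hr1 : ∑ i, r i = 1) :
    (∑ i, q i ^ α) ^ (1 / α) ≤ ∑ i, q i * r i ^ ((α - 1) / α) := by
  have hz : ∀ i, 0 ≤ q i * r i ^ (-(1 / α)) := fun i =>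
    mul_nonneg (hq i) (rpow_nonneg (hr i).le _)
  have h := arith_mean_le_rpow_mean univ r (fun i => (q i * r i ^ (-(1 / α))) ^ α)
    (fun i _ => (hr i).le) hr1 (fun i _ => rpow_nonneg (hz i) _) (one_le_one_div hα0 hα)
  simp only [← rpow_mul (hz _), mul_one_div_cancel hα0.ne', rpow_one,
    mul_mul_rpow_neg_one_div hα0.ne' (hr _),
    mul_mul_rpow_neg_one_div_rpow_s16 hα0.ne' (hr _) (hq _)] at h
  rw [one_div_one_div] at h
  rwa [one_div, rpow_inv_le_iff_of_pos (sum_nonneg fun i _ => rpow_nonneg (hq i) α)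
    (sum_nonneg fun i _ => mul_nonneg (hq i) (rpow_nonneg (hr i).le _)) hα0]

theorem sum_mul_escort_rpow (hα : 0 < α) (hq : ∀ i, 0 ≤ q i) :
    ∑ i, q i * (q i ^ α / ∑ j, q j ^ α) ^ ((α - 1) / α) = (∑ j, q j ^ α) ^ (1 / α) := by
  set S := ∑ j, q j ^ α
  have hS : 0 ≤ S := sum_nonneg fun j _ => rpow_nonneg (hq j) α
  rcases hS.eq_or_lt with hS0 | hSpos
  · have hq0 : ∀ i, q i = 0 := fun i => by
      have hqα := (sum_eq_zero_iff_of_nonneg fun j _ => rpow_nonneg (hq j) α).1 hS0.symm i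
      exact (rpow_eq_zero (hq i) hα.ne').1 (hqα (mem_univ i))
    simp [hq0, ← hS0, hα.ne']
  have hterm : ∀ i, q i * (q i ^ α / S) ^ ((α - 1) / α) = q i ^ α / S ^ ((α - 1) / α) := by
    intro i
    rcases (hq i).eq_or_lt with hqi | hqi
    · simp [← hqi, hα.ne']
    rw [div_rpow (rpow_nonneg (hq i) α) hS, ← rpow_mul (hq i), mul_div_cancel₀ _ hα.ne',
      ← mul_div_assoc, ← rpow_one_add' (hq i) (by simp [hα.ne']), add_sub_cancel]
  rw [sum_congr rfl fun i _ => hterm i, ← sum_div,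
    show 1 / α = 1 - (α - 1) / α by field_simp; ring, rpow_sub hSpos, rpow_one]

noncomputable def smoothedEscort (α ε : ℝ) (q : ι → ℝ) (i : ι) : ℝ :=
  (q i ^ α + ε) / ∑ j, (q j ^ α + ε)

theorem smoothedEscort_pos (hq : ∀ i, 0 ≤ q i) {ε : ℝ} (hε : 0 < ε) (i : ι) :
    0 < smoothedEscort α ε q i := by
  have hnum : ∀ j, 0 < q j ^ α + ε := fun j => add_pos_of_nonneg_of_pos (rpow_nonneg (hq j) α) hε
  exact div_pos (hnum i) (sum_pos (fun j _ => hnum j) ⟨i, mem_univ i⟩)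

theorem sum_smoothedEscort [Nonempty ι] (hq : ∀ i, 0 ≤ q i) {ε : ℝ} (hε : 0 < ε) :
    ∑ i, smoothedEscort α ε q i = 1 := by
  have hnum : ∀ j, 0 < q j ^ α + ε := fun j =>
    add_pos_of_nonneg_of_pos (rpow_nonneg (hq j) α) hε
  exact (sum_div ..).symm.trans (div_self (sum_pos (fun j _ => hnum j) univ_nonempty).ne')

theorem tendsto_sum_mul_smoothedEscort_rpow (hα : 0 < α) (hq : ∀ i, 0 ≤ q i) :
    Filter.Tendsto (fun ε => ∑ i, q i * smoothedEscort α ε q i ^ ((α - 1) / α))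
      (nhdsWithin 0 (Set.Ioi 0)) (nhds ((∑ i, q i ^ α) ^ (1 / α))) := by
  rw [← sum_mul_escort_rpow hα hq]
  refine tendsto_finsetSum _ fun i _ => ?_
  rcases (hq i).eq_or_lt with hqi | hqi
  · simp [← hqi]
  have hS : 0 < ∑ j, q j ^ α :=
    sum_pos' (fun j _ => rpow_nonneg (hq j) α) ⟨i, mem_univ i, rpow_pos_of_pos hqi α⟩
  have hcont : ContinuousAt (fun ε => smoothedEscort α ε q i) 0 :=
    (continuousAt_const.add continuousAt_id).div
      (continuous_finsetSum _ fun j _ => continuous_const.add continuous_id).continuousAt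
      (by simpa using hS.ne')
  have h0 : smoothedEscort α 0 q i = q i ^ α / ∑ j, q j ^ α := by simp [smoothedEscort]
  have h0pos : smoothedEscort α 0 q i ≠ 0 := h0 ▸ (div_pos (rpow_pos_of_pos hqi α) hS).ne'
  rw [← h0]
  exact tendsto_const_nhds.mul
    ((hcont.rpow_const (Or.inl h0pos)).tendsto.mono_left nhdsWithin_le_nhds)

end PowerMean

section Vulnerability

variable {X Y : Type*} [Fintype X] [Nonempty X] [Fintype Y] {α : ℝ}

theorem isLUB_condVulnerability (hα0 : 0 < α) (hα1 : α ≠ 1) {q : Y → X → ℝ}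
    (hq : ∀ y x, 0 ≤ q y x) (hT : 0 < ∑ y, (∑ x, q y x ^ α) ^ (1 / α)) :
    IsLUB {v : ℝ | ∃ r : Y → X → ℝ, (∀ y x, 0 < r y x) ∧ (∀ y, ∑ x, r y x = 1) ∧
        v = (∑ y, ∑ x, q y x * r y x ^ ((α - 1) / α)) ^ (α / (α - 1))}
      ((∑ y, (∑ x, q y x ^ α) ^ (1 / α)) ^ (α / (α - 1))) := by
  refine ⟨?_, fun b hb => ?_⟩
  · rintro v ⟨r, hr, hr1, rfl⟩
    rcases hα1.lt_or_gt with hlt | hgt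
    · refine rpow_le_rpow_of_nonpos hT ?_ (div_nonpos_of_nonneg_of_nonpos hα0.le (by linarith))
      exact sum_le_sum fun y _ => rpow_le_sum_mul_rpow_of_le_one hα0 hlt.le (hq y) (hr y) (hr1 y)
    · refine rpow_le_rpow (sum_nonneg fun y _ => sum_nonneg fun x _ =>
        mul_nonneg (hq y x) (rpow_nonneg (hr y x).le _)) ?_ (div_nonneg hα0.le (by linarith))
      exact sum_le_sum fun y _ => sum_mul_rpow_le_of_one_le hgt.le (hq y) (hr y) (hr1 y)
  · have hlim := (tendsto_finsetSum univ fun y _ => tendsto_sum_mul_smoothedEscort_rpow hα0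
      (hq y)).rpow_const (p := α / (α - 1)) (Or.inl hT.ne')
    refine le_of_tendsto hlim ?_
    filter_upwards [self_mem_nhdsWithin] with ε hε
    exact hb ⟨fun y => smoothedEscort α ε (q y), fun y => smoothedEscort_pos (hq y) hε,
      fun y => sum_smoothedEscort (hq y) hε, rfl⟩

theorem sSup_condVulnerability (hα0 : 0 < α) (hα1 : α ≠ 1) {q : Y → X → ℝ}
    (hq : ∀ y x, 0 ≤ q y x) (hT : 0 < ∑ y, (∑ x, q y x ^ α) ^ (1 / α)) :
    sSup {v : ℝ | ∃ r : Y → X → ℝ, (∀ y x, 0 < r y x) ∧ (∀ y, ∑ x, r y x = 1) ∧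
        v = (∑ y, ∑ x, q y x * r y x ^ ((α - 1) / α)) ^ (α / (α - 1))}
      = (∑ y, (∑ x, q y x ^ α) ^ (1 / α)) ^ (α / (α - 1)) :=
  (isLUB_condVulnerability hα0 hα1 hq hT).csSup_eq ⟨_, fun y => smoothedEscort α 1 (q y),
    fun y => smoothedEscort_pos (hq y) one_pos, fun y => sum_smoothedEscort (hq y) one_pos, rfl⟩

theorem sSup_priorVulnerability (hα0 : 0 < α) (hα1 : α ≠ 1) {q : X → ℝ}
    (hq : ∀ x, 0 ≤ q x) (hS : 0 < ∑ x, q x ^ α) :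
    sSup {v : ℝ | ∃ r : X → ℝ, (∀ x, 0 < r x) ∧ ∑ x, r x = 1 ∧
        v = (∑ x, q x * r x ^ ((α - 1) / α)) ^ (α / (α - 1))}
      = ((∑ x, q x ^ α) ^ (1 / α)) ^ (α / (α - 1)) := by
  convert sSup_condVulnerability (Y := Unit) hα0 hα1 (fun _ => hq)
    (by simpa using rpow_pos_of_pos hS _) using 2
  · ext v
    constructor
    · rintro ⟨r, hr, hr1, rfl⟩
      exact ⟨fun _ => r, fun _ => hr, fun _ => hr1, by simp⟩
    · rintro ⟨r, hr, hr1, rfl⟩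
      exact ⟨r (), hr (), hr1 (), by simp⟩
  · simp

end Vulnerability

theorem arimoto_mi_eq_generalized_leakage_general
    {X Y : Type*} [Fintype X] [Fintype Y] [Nonempty X]
    (α : ℝ) (hα0 : 0 < α) (hα1 : α ≠ 1)
    (p : X × Y → ℝ) (hp : ∀ z, 0 ≤ p z) (hp1 : (∑ z, p z) = 1)
    (pX : X → ℝ) (hpXpos : ∀ x, 0 < pX x) :
    (1 / (1 - α)) * Real.log (∑ x, pX x ^ α)
      - (α / (1 - α)) * Real.log (∑ y, (∑ x, p (x, y) ^ α) ^ (1 / α))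
    = Real.log (sSup {v : ℝ | ∃ r : Y → X → ℝ,
          (∀ y x, 0 < r y x) ∧ (∀ y, (∑ x, r y x) = 1) ∧
          v = (∑ z : X × Y, p z * r z.2 z.1 ^ ((α - 1) / α)) ^ (α / (α - 1))})
      - Real.log (sSup {v : ℝ | ∃ r₀ : X → ℝ,
          (∀ x, 0 < r₀ x) ∧ (∑ x, r₀ x) = 1 ∧
          v = (∑ x, pX x * r₀ x ^ ((α - 1) / α)) ^ (α / (α - 1))}) := by
  obtain ⟨⟨x₀, y₀⟩, hz₀⟩ : ∃ z, 0 < p z := by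
    by_contra! h
    linarith [sum_nonpos fun z (_ : z ∈ univ) => h z]
  have hS₀ : 0 < ∑ x, p (x, y₀) ^ α :=
    sum_pos' (fun x _ => rpow_nonneg (hp _) α) ⟨x₀, mem_univ _, rpow_pos_of_pos hz₀ α⟩
  have hT : 0 < ∑ y, (∑ x, p (x, y) ^ α) ^ (1 / α) :=
    sum_pos' (fun y _ => rpow_nonneg (sum_nonneg fun x _ => rpow_nonneg (hp _) α) _)
      ⟨y₀, mem_univ _, rpow_pos_of_pos hS₀ _⟩
  have hS : 0 < ∑ x, pX x ^ α := sum_pos (fun x _ => rpow_pos_of_pos (hpXpos x) α) univ_nonempty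
  simp only [Fintype.sum_prod_type_right]
  rw [sSup_condVulnerability hα0 hα1 (q := fun y x => p (x, y)) (fun y x => hp _) hT,
    sSup_priorVulnerability hα0 hα1 (fun x => (hpXpos x).le) hS,
    log_rpow hT, log_rpow (rpow_pos_of_pos hS _), log_rpow hS]
  have h1α : 1 - α ≠ 0 := sub_ne_zero.2 hα1.symm
  have hα1' : α - 1 ≠ 0 := sub_ne_zero.2 hα1
  field_simp
  ring

/-- Generalized g-leakage representation of Arimoto mutual information:
`I_α^A(X;Y) = H_α(X) − H_α^A(X|Y)` equals `log(V_cond/V_prior)` for the KN function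
`ln_{1/α}` and the soft 0-1 score. -/
theorem arimoto_mi_eq_generalized_leakage
    {X Y : Type*} [Fintype X] [Fintype Y] [Nonempty X] [Nonempty Y]
    (α : ℝ) (hα0 : 0 < α) (hα1 : α ≠ 1)
    (p : X × Y → ℝ) (hp : ∀ z, 0 ≤ p z) (hp1 : (∑ z, p z) = 1)
    (pX : X → ℝ) (hpX : ∀ x, pX x = ∑ y, p (x, y)) (hpXpos : ∀ x, 0 < pX x) :
    (1 / (1 - α)) * Real.log (∑ x, pX x ^ α)
      - (α / (1 - α)) * Real.log (∑ y, (∑ x, p (x, y) ^ α) ^ (1 / α))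
    = Real.log (sSup {v : ℝ | ∃ r : Y → X → ℝ,
          (∀ y x, 0 < r y x) ∧ (∀ y, (∑ x, r y x) = 1) ∧
          v = (∑ z : X × Y, p z * r z.2 z.1 ^ ((α - 1) / α)) ^ (α / (α - 1))})
      - Real.log (sSup {v : ℝ | ∃ r₀ : X → ℝ,
          (∀ x, 0 < r₀ x) ∧ (∑ x, r₀ x) = 1 ∧
          v = (∑ x, pX x * r₀ x ^ ((α - 1) / α)) ^ (α / (α - 1))}) :=
  arimoto_mi_eq_generalized_leakage_general α hα0 hα1 p hp hp1 pX hpXpos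
end
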